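/- Let μ be a finite measure on [0, π], and let φ_f, φ_v : [0, π] → ℝ be positive integrable functions such that ω ↦ φ_f(ω)/φ_v(ω) is monotone decreasing, and let h : [0, π] → ℝ be nonnegative, integrable, and monotone increasing, not μ-a.e. constant, with φ_f/φ_v not μ-a.e. constant. Then (∫ h·φ_v dμ)/(∫ φ_v dμ) > (∫ h·φ_f dμ)/(∫ φ_f dμ). -/

import Mathlib

open MeasureTheory Set Real

/-- If a real function is not a.e. constant, there is a threshold splitting the
measure into two positive-measure level pieces. -/
private lemma measure_split (μ : Measure ℝ) (f : ℝ → ℝ)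
    (hf : ¬ ∃ c : ℝ, f =ᵐ[μ] fun _ => c) :
    ∃ a : ℝ, μ {x | f x ≤ a} ≠ 0 ∧ μ {x | a < f x} ≠ 0 := by
  have hμ : μ ≠ 0 := by
    rintro rfl
    exact hf ⟨0, by simp [Filter.EventuallyEq, MeasureTheory.ae_zero]⟩
  by_contra hcon
  push_neg at hcon
  have hunivne : μ univ ≠ 0 := fun h => hμ (Measure.measure_univ_eq_zero.mp h)
  set E : Set ℝ := {a | μ {x | f x ≤ a} = 0} with hE
  have hmono : ∀ {a b : ℝ}, a ≤ b → b ∈ E → a ∈ E := by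
    intro a b hab hb
    exact measure_mono_null (fun x hx => le_trans hx hab) hb
  have hEne : E.Nonempty := by
    by_contra hno
    have hz : ∀ a : ℝ, μ {x | a < f x} = 0 := by
      intro a
      exact hcon a (fun h0 => hno ⟨a, h0⟩)
    have hU : μ (⋃ n : ℕ, {x | -(n : ℝ) < f x}) = 0 :=
      measure_iUnion_null fun n => hz _
    apply hunivne
    refine measure_mono_null (fun x _ => ?_) hU
    obtain ⟨n, hn⟩ := exists_nat_gt (-(f x))
    exact mem_iUnion.2 ⟨n, by simp only [mem_setOf_eq]; linarith⟩
  have hEub : ∃ b : ℝ, b ∉ E := by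
    by_contra hall
    push_neg at hall
    apply hunivne
    have hU : μ (⋃ n : ℕ, {x | f x ≤ (n : ℝ)}) = 0 :=
      measure_iUnion_null fun n => hall _
    refine measure_mono_null (fun x _ => ?_) hU
    obtain ⟨n, hn⟩ := exists_nat_ge (f x)
    exact mem_iUnion.2 ⟨n, hn⟩
  obtain ⟨b, hb⟩ := hEub
  have hbdd : BddAbove E := by
    refine ⟨b, fun a ha => ?_⟩
    by_contra hba
    push_neg at hba
    exact hb (hmono hba.le ha)
  set c := sSup E with hc
  apply hf
  refine ⟨c, ?_⟩
  rw [Filter.EventuallyEq, ae_iff]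
  have h1 : μ {x | f x < c} = 0 := by
    have hU : μ (⋃ n : ℕ, {x | f x ≤ c - 1 / (n + 1)}) = 0 := by
      refine measure_iUnion_null fun n => ?_
      have hlt : c - 1 / ((n : ℝ) + 1) < c := by
        have : (0:ℝ) < 1 / ((n : ℝ) + 1) := by positivity
        linarith
      obtain ⟨e, heE, he⟩ := exists_lt_of_lt_csSup hEne hlt
      exact measure_mono_null (fun x hx => le_trans hx he.le) heE
    refine measure_mono_null (fun x hx => ?_) hU
    have hpos : (0:ℝ) < c - f x := sub_pos.2 hx
    obtain ⟨n, hn⟩ := exists_nat_one_div_lt hpos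
    exact mem_iUnion.2 ⟨n, by simp only [mem_setOf_eq]; linarith⟩
  have h2 : μ {x | c < f x} = 0 := by
    have key : ∀ n : ℕ, μ {x | c + 1 / ((n : ℝ) + 1) < f x} = 0 := by
      intro n
      apply hcon
      intro h0
      have hmem : c + 1 / ((n : ℝ) + 1) ∈ E := h0
      have hle := le_csSup hbdd hmem
      have hpos : (0:ℝ) < 1 / ((n : ℝ) + 1) := by positivity
      rw [← hc] at hle
      linarith
    have hU : μ (⋃ n : ℕ, {x | c + 1 / ((n : ℝ) + 1) < f x}) = 0 :=
      measure_iUnion_null key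
    refine measure_mono_null (fun x hx => ?_) hU
    have hpos : (0:ℝ) < f x - c := sub_pos.2 hx
    obtain ⟨n, hn⟩ := exists_nat_one_div_lt hpos
    exact mem_iUnion.2 ⟨n, by simp only [mem_setOf_eq]; linarith⟩
  refine measure_mono_null (fun x hx => ?_) (measure_union_null h1 h2)
  rcases lt_or_gt_of_ne (hx : f x ≠ c) with h | h
  · exact Or.inl h
  · exact Or.inr h

/-- Key strict inequality in the proof of Proposition 4 (Chebyshev-type correlation
inequality): if the spectral ratio `φf/φv` is decreasing and the high-pass weight `h`
is increasing, and neither is a.e. constant, then `h` correlates strictly more with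
`φv` than with `φf`. -/
theorem stmt1
    (μ : Measure ℝ) [IsFiniteMeasure μ] (hμ : μ (Icc (0:ℝ) π)ᶜ = 0)
    (φf φv h : ℝ → ℝ)
    (hφf_pos : ∀ ω ∈ Icc (0:ℝ) π, 0 < φf ω)
    (hφv_pos : ∀ ω ∈ Icc (0:ℝ) π, 0 < φv ω)
    (hφf_int : Integrable φf μ) (hφv_int : Integrable φv μ)
    (hratio_anti : AntitoneOn (fun ω => φf ω / φv ω) (Icc (0:ℝ) π))
    (hh_nonneg : ∀ ω ∈ Icc (0:ℝ) π, 0 ≤ h ω)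
    (hh_int : Integrable h μ)
    (hh_mono : MonotoneOn h (Icc (0:ℝ) π))
    (hh_nc : ¬ ∃ c : ℝ, h =ᵐ[μ] fun _ => c)
    (hratio_nc : ¬ ∃ c : ℝ, (fun ω => φf ω / φv ω) =ᵐ[μ] fun _ => c) :
    (∫ ω, h ω * φv ω ∂μ) / (∫ ω, φv ω ∂μ) >
      (∫ ω, h ω * φf ω ∂μ) / (∫ ω, φf ω ∂μ) := by
  set S : Set ℝ := Icc (0:ℝ) π with hSdef
  have hμne : μ ≠ 0 := by
    rintro rfl
    exact hh_nc ⟨0, by simp [Filter.EventuallyEq, MeasureTheory.ae_zero]⟩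
  -- measurable versions
  obtain ⟨H, hHm, hHeq⟩ : ∃ H, StronglyMeasurable H ∧ h =ᵐ[μ] H :=
    ⟨_, hh_int.1.stronglyMeasurable_mk, hh_int.1.ae_eq_mk⟩
  obtain ⟨F, hFm, hFeq⟩ : ∃ F, StronglyMeasurable F ∧ φf =ᵐ[μ] F :=
    ⟨_, hφf_int.1.stronglyMeasurable_mk, hφf_int.1.ae_eq_mk⟩
  obtain ⟨V, hVm, hVeq⟩ : ∃ V, StronglyMeasurable V ∧ φv =ᵐ[μ] V :=
    ⟨_, hφv_int.1.stronglyMeasurable_mk, hφv_int.1.ae_eq_mk⟩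
  set R : ℝ → ℝ := fun ω => F ω / V ω with hRdef
  have hRmeas : Measurable R := hFm.measurable.div hVm.measurable
  -- the good set
  set T : Set ℝ := {x | x ∈ S ∧ h x = H x ∧ φf x = F x ∧ φv x = V x} with hTdef
  have hSae : ∀ᵐ x ∂μ, x ∈ S := by
    rw [ae_iff]
    exact hμ
  have haeT : ∀ᵐ x ∂μ, x ∈ T := by
    filter_upwards [hSae, hHeq, hFeq, hVeq] with x h1 h2 h3 h4
    exact ⟨h1, h2, h3, h4⟩
  have hTc : μ Tᶜ = 0 := by
    rw [ae_iff] at haeT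
    exact haeT
  have hinterT : ∀ s : Set ℝ, μ (s ∩ T) = μ s := by
    intro s
    refine le_antisymm (measure_mono inter_subset_left) ?_
    calc μ s ≤ μ ((s ∩ T) ∪ Tᶜ) := by
          refine measure_mono fun x hx => ?_
          by_cases hT : x ∈ T
          · exact Or.inl ⟨hx, hT⟩
          · exact Or.inr hT
      _ ≤ μ (s ∩ T) + μ Tᶜ := measure_union_le _ _
      _ = μ (s ∩ T) := by rw [hTc, add_zero]
  have hμT : μ T ≠ 0 := by
    intro h0
    apply hμne
    rw [← Measure.measure_univ_eq_zero]
    refine le_zero_iff.mp ?_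
    calc μ univ ≤ μ T + μ Tᶜ := by
          refine le_trans (measure_mono ?_) (measure_union_le _ _)
          intro x _
          by_cases hT : x ∈ T
          · exact Or.inl hT
          · exact Or.inr hT
      _ = 0 := by rw [h0, hTc, add_zero]
  -- pointwise facts on T
  have hVpos : ∀ x ∈ T, 0 < V x := fun x hx => hx.2.2.2 ▸ hφv_pos x hx.1
  have hFpos : ∀ x ∈ T, 0 < F x := fun x hx => hx.2.2.1 ▸ hφf_pos x hx.1
  have hHmono : ∀ x ∈ T, ∀ y ∈ T, x ≤ y → H x ≤ H y := by
    intro x hx y hy hxy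
    rw [← hx.2.1, ← hy.2.1]
    exact hh_mono hx.1 hy.1 hxy
  have hRanti : ∀ x ∈ T, ∀ y ∈ T, x ≤ y → R y ≤ R x := by
    intro x hx y hy hxy
    have := hratio_anti hx.1 hy.1 hxy
    simp only at this
    rw [hRdef]
    simp only
    rw [← hx.2.2.1, ← hx.2.2.2, ← hy.2.2.1, ← hy.2.2.2]
    exact this
  have hcross : ∀ x ∈ T, ∀ y ∈ T, x ≤ y → V x * F y ≤ F x * V y := by
    intro x hx y hy hxy
    have hr := hRanti x hx y hy hxy
    rw [hRdef] at hr
    simp only at hr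
    rw [div_le_div_iff₀ (hVpos y hy) (hVpos x hx)] at hr
    linarith
  -- integrability of products
  have hMb : ∀ x ∈ S, |h x| ≤ max |h 0| |h π| := by
    intro x hx
    have h0S : (0:ℝ) ∈ S := by
      rw [hSdef]; exact ⟨le_rfl, pi_pos.le⟩
    have hπS : π ∈ S := by
      rw [hSdef]; exact ⟨pi_pos.le, le_rfl⟩
    have hlow := hh_mono h0S hx hx.1
    have hhigh := hh_mono hx hπS hx.2
    rw [abs_le]
    constructor
    · calc -(max |h 0| |h π|) ≤ -|h 0| := by
            simp [le_max_left]
        _ ≤ h 0 := neg_abs_le _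
        _ ≤ h x := hlow
    · calc h x ≤ h π := hhigh
        _ ≤ |h π| := le_abs_self _
        _ ≤ max |h 0| |h π| := le_max_right _ _
  have hhv_int : Integrable (fun ω => h ω * φv ω) μ := by
    refine Integrable.mono (hφv_int.const_mul (max |h 0| |h π|))
      (hh_int.1.mul hφv_int.1) ?_
    filter_upwards [hSae] with x hx
    rw [norm_mul, Real.norm_eq_abs, Real.norm_eq_abs, Real.norm_eq_abs, abs_mul,
      abs_of_nonneg (le_trans (abs_nonneg (h 0)) (le_max_left _ _))]
    exact mul_le_mul_of_nonneg_right (hMb x hx) (abs_nonneg _)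
  have hhf_int : Integrable (fun ω => h ω * φf ω) μ := by
    refine Integrable.mono (hφf_int.const_mul (max |h 0| |h π|))
      (hh_int.1.mul hφf_int.1) ?_
    filter_upwards [hSae] with x hx
    rw [norm_mul, Real.norm_eq_abs, Real.norm_eq_abs, Real.norm_eq_abs, abs_mul,
      abs_of_nonneg (le_trans (abs_nonneg (h 0)) (le_max_left _ _))]
    exact mul_le_mul_of_nonneg_right (hMb x hx) (abs_nonneg _)
  -- measurable-version integrability and integral identities
  have hHVeq : (fun ω => h ω * φv ω) =ᵐ[μ] fun ω => H ω * V ω := hHeq.mul hVeq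
  have hHFeq : (fun ω => h ω * φf ω) =ᵐ[μ] fun ω => H ω * F ω := hHeq.mul hFeq
  have hHV_int : Integrable (fun ω => H ω * V ω) μ := hhv_int.congr hHVeq
  have hHF_int : Integrable (fun ω => H ω * F ω) μ := hhf_int.congr hHFeq
  have hV_int : Integrable V μ := hφv_int.congr hVeq
  have hF_int : Integrable F μ := hφf_int.congr hFeq
  have hIHV : ∫ ω, h ω * φv ω ∂μ = ∫ ω, H ω * V ω ∂μ := integral_congr_ae hHVeq
  have hIHF : ∫ ω, h ω * φf ω ∂μ = ∫ ω, H ω * F ω ∂μ := integral_congr_ae hHFeq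
  have hIV : ∫ ω, φv ω ∂μ = ∫ ω, V ω ∂μ := integral_congr_ae hVeq
  have hIF : ∫ ω, φf ω ∂μ = ∫ ω, F ω ∂μ := integral_congr_ae hFeq
  -- positivity of denominators
  have hIVpos : 0 < ∫ ω, V ω ∂μ := by
    rw [integral_pos_iff_support_of_nonneg_ae ?_ hV_int]
    · refine lt_of_lt_of_le ?_ (measure_mono (fun x hx => (hVpos x hx).ne' : T ⊆ Function.support V))
      exact pos_iff_ne_zero.2 hμT
    · filter_upwards [haeT] with x hx
      exact (hVpos x hx).le
  have hIFpos : 0 < ∫ ω, F ω ∂μ := by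
    rw [integral_pos_iff_support_of_nonneg_ae ?_ hF_int]
    · refine lt_of_lt_of_le ?_ (measure_mono (fun x hx => (hFpos x hx).ne' : T ⊆ Function.support F))
      exact pos_iff_ne_zero.2 hμT
    · filter_upwards [haeT] with x hx
      exact (hFpos x hx).le
  -- the double-integral function
  set Φ : ℝ × ℝ → ℝ :=
    fun z => (H z.1 - H z.2) * (V z.1 * F z.2 - F z.1 * V z.2) with hΦdef
  have hΦexp : Φ = fun z => (H z.1 * V z.1) * F z.2 - (H z.1 * F z.1) * V z.2
      - V z.1 * (H z.2 * F z.2) + F z.1 * (H z.2 * V z.2) := by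
    funext z
    rw [hΦdef]
    ring
  have hint1 : Integrable (fun z : ℝ × ℝ => (H z.1 * V z.1) * F z.2) (μ.prod μ) :=
    hHV_int.mul_prod hF_int
  have hint2 : Integrable (fun z : ℝ × ℝ => (H z.1 * F z.1) * V z.2) (μ.prod μ) :=
    hHF_int.mul_prod hV_int
  have hint3 : Integrable (fun z : ℝ × ℝ => V z.1 * (H z.2 * F z.2)) (μ.prod μ) :=
    hV_int.mul_prod hHF_int
  have hint4 : Integrable (fun z : ℝ × ℝ => F z.1 * (H z.2 * V z.2)) (μ.prod μ) :=
    hF_int.mul_prod hHV_int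
  have hΦint : Integrable Φ (μ.prod μ) := by
    rw [hΦexp]
    exact ((hint1.sub hint2).sub hint3).add hint4
  have hΦval : ∫ z, Φ z ∂(μ.prod μ) =
      (∫ ω, H ω * V ω ∂μ) * (∫ ω, F ω ∂μ) - (∫ ω, H ω * F ω ∂μ) * (∫ ω, V ω ∂μ)
      - (∫ ω, V ω ∂μ) * (∫ ω, H ω * F ω ∂μ)
      + (∫ ω, F ω ∂μ) * (∫ ω, H ω * V ω ∂μ) := by
    have e1 : ∫ z : ℝ × ℝ, (fun ω => H ω * V ω) z.1 * F z.2 ∂(μ.prod μ) =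
        (∫ ω, H ω * V ω ∂μ) * ∫ ω, F ω ∂μ :=
      integral_prod_mul (fun ω => H ω * V ω) F
    have e2 : ∫ z : ℝ × ℝ, (fun ω => H ω * F ω) z.1 * V z.2 ∂(μ.prod μ) =
        (∫ ω, H ω * F ω ∂μ) * ∫ ω, V ω ∂μ :=
      integral_prod_mul (fun ω => H ω * F ω) V
    have e3 : ∫ z : ℝ × ℝ, V z.1 * (fun ω => H ω * F ω) z.2 ∂(μ.prod μ) =
        (∫ ω, V ω ∂μ) * ∫ ω, H ω * F ω ∂μ :=
      integral_prod_mul V (fun ω => H ω * F ω)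
    have e4 : ∫ z : ℝ × ℝ, F z.1 * (fun ω => H ω * V ω) z.2 ∂(μ.prod μ) =
        (∫ ω, F ω ∂μ) * ∫ ω, H ω * V ω ∂μ :=
      integral_prod_mul F (fun ω => H ω * V ω)
    simp only at e1 e2 e3 e4
    have hint12 : Integrable (fun z : ℝ × ℝ =>
        (H z.1 * V z.1) * F z.2 - (H z.1 * F z.1) * V z.2) (μ.prod μ) := hint1.sub hint2
    have hint123 : Integrable (fun z : ℝ × ℝ =>
        (H z.1 * V z.1) * F z.2 - (H z.1 * F z.1) * V z.2
          - V z.1 * (H z.2 * F z.2)) (μ.prod μ) := hint12.sub hint3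
    rw [hΦexp, integral_add hint123 hint4, integral_sub hint12 hint3,
      integral_sub hint1 hint2, e1, e2, e3, e4]
  -- a.e. both coordinates in T
  have haeTT : ∀ᵐ z ∂(μ.prod μ), z.1 ∈ T ∧ z.2 ∈ T := by
    have h1 : (μ.prod μ) {z : ℝ × ℝ | z.1 ∉ T} = 0 := by
      have he : {z : ℝ × ℝ | z.1 ∉ T} = Tᶜ ×ˢ (univ : Set ℝ) := by
        ext z
        simp [Set.mem_prod]
      rw [he, Measure.prod_prod, hTc, zero_mul]
    have h2 : (μ.prod μ) {z : ℝ × ℝ | z.2 ∉ T} = 0 := by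
      have he : {z : ℝ × ℝ | z.2 ∉ T} = (univ : Set ℝ) ×ˢ Tᶜ := by
        ext z
        simp [Set.mem_prod]
      rw [he, Measure.prod_prod, hTc, mul_zero]
    rw [ae_iff]
    refine measure_mono_null (fun z hz => ?_) (measure_union_null h1 h2)
    simp only [mem_setOf_eq, not_and_or] at hz
    rcases hz with hz | hz
    · exact Or.inl hz
    · exact Or.inr hz
  -- nonnegativity of Φ on T × T
  have hΦnn : ∀ x ∈ T, ∀ y ∈ T, 0 ≤ Φ (x, y) := by
    intro x hx y hy
    have hbeta : Φ (x, y) = (H x - H y) * (V x * F y - F x * V y) := by rw [hΦdef]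
    rw [hbeta]
    rcases le_total x y with hxy | hxy
    · have h1 : H x - H y ≤ 0 := sub_nonpos.2 (hHmono x hx y hy hxy)
      have h2 : V x * F y - F x * V y ≤ 0 := sub_nonpos.2 (hcross x hx y hy hxy)
      nlinarith
    · have h1 : 0 ≤ H x - H y := sub_nonneg.2 (hHmono y hy x hx hxy)
      have h2 : 0 ≤ V x * F y - F x * V y := by
        have := hcross y hy x hx hxy
        nlinarith
      exact mul_nonneg h1 h2
  -- nonconstancy transfer and splits
  have hHnc : ¬ ∃ c : ℝ, H =ᵐ[μ] fun _ => c := by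
    rintro ⟨c, hc⟩
    exact hh_nc ⟨c, hHeq.trans hc⟩
  have hRnc : ¬ ∃ c : ℝ, R =ᵐ[μ] fun _ => c := by
    rintro ⟨c, hc⟩
    refine hratio_nc ⟨c, ?_⟩
    refine Filter.EventuallyEq.trans ?_ hc
    filter_upwards [haeT] with x hx
    rw [hRdef]
    simp only
    rw [hx.2.2.1, hx.2.2.2]
  obtain ⟨a, haA, haB⟩ := measure_split μ H hHnc
  obtain ⟨c, hcD, hcC⟩ := measure_split μ R hRnc
  set A : Set ℝ := {x | H x ≤ a} ∩ T with hAdef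
  set B : Set ℝ := {x | a < H x} ∩ T with hBdef
  set C : Set ℝ := {x | c < R x} ∩ T with hCdef
  set D : Set ℝ := {x | R x ≤ c} ∩ T with hDdef
  have hμA : μ A ≠ 0 := by rw [hAdef, hinterT]; exact haA
  have hμB : μ B ≠ 0 := by rw [hBdef, hinterT]; exact haB
  have hμC : μ C ≠ 0 := by rw [hCdef, hinterT]; exact hcC
  have hμD : μ D ≠ 0 := by rw [hDdef, hinterT]; exact hcD
  -- key impossibility
  have hkey : ¬ ((B ∩ C).Nonempty ∧ (A ∩ D).Nonempty) := by
    rintro ⟨⟨x, hxB, hxC⟩, ⟨y, hyA, hyD⟩⟩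
    have hxy : x ≤ y := by
      by_contra hyx
      push_neg at hyx
      have := hRanti y hyD.2 x hxC.2 hyx.le
      have hx1 : c < R x := hxC.1
      have hy1 : R y ≤ c := hyD.1
      linarith
    have hHle := hHmono x hxB.2 y hyA.2 hxy
    have hx2 : a < H x := hxB.1
    have hy2 : H y ≤ a := hyA.1
    linarith
  have hAC : μ (A ∩ C) ≠ 0 := by
    intro h0
    apply hkey
    constructor
    · refine nonempty_of_measure_ne_zero (μ := μ) ?_
      intro h0'
      apply hμC
      refine measure_mono_null (fun x hx => ?_) (measure_union_null h0 h0')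
      by_cases hH : H x ≤ a
      · exact Or.inl ⟨⟨hH, hx.2⟩, hx⟩
      · exact Or.inr ⟨⟨lt_of_not_ge hH, hx.2⟩, hx⟩
    · refine nonempty_of_measure_ne_zero (μ := μ) ?_
      intro h0'
      apply hμA
      refine measure_mono_null (fun x hx => ?_) (measure_union_null h0 h0')
      by_cases hR : R x ≤ c
      · exact Or.inr ⟨hx, ⟨hR, hx.2⟩⟩
      · exact Or.inl ⟨hx, ⟨lt_of_not_ge hR, hx.2⟩⟩
  have hBD : μ (B ∩ D) ≠ 0 := by
    intro h0
    apply hkey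
    constructor
    · refine nonempty_of_measure_ne_zero (μ := μ) ?_
      intro h0'
      apply hμB
      refine measure_mono_null (fun x hx => ?_) (measure_union_null h0' h0)
      by_cases hR : R x ≤ c
      · exact Or.inr ⟨hx, ⟨hR, hx.2⟩⟩
      · exact Or.inl ⟨hx, ⟨lt_of_not_ge hR, hx.2⟩⟩
    · refine nonempty_of_measure_ne_zero (μ := μ) ?_
      intro h0'
      apply hμD
      refine measure_mono_null (fun x hx => ?_) (measure_union_null h0' h0)
      by_cases hH : H x ≤ a
      · exact Or.inl ⟨⟨hH, hx.2⟩, hx⟩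
      · exact Or.inr ⟨⟨lt_of_not_ge hH, hx.2⟩, hx⟩
  -- shrink to get quantitative gaps
  have hshrC : ∃ c', c < c' ∧ μ (A ∩ C ∩ {x | c' ≤ R x}) ≠ 0 := by
    by_contra hno
    push_neg at hno
    have hU : μ (⋃ n : ℕ, A ∩ C ∩ {x | c + 1 / ((n : ℝ) + 1) ≤ R x}) = 0 := by
      refine measure_iUnion_null fun n => ?_
      refine hno _ ?_
      have : (0:ℝ) < 1 / ((n : ℝ) + 1) := by positivity
      linarith
    apply hAC
    refine measure_mono_null (fun x hx => ?_) hU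
    have hcR : c < R x := hx.2.1
    obtain ⟨n, hn⟩ := exists_nat_one_div_lt (sub_pos.2 hcR)
    exact mem_iUnion.2 ⟨n, hx, by simp only [mem_setOf_eq]; linarith⟩
  have hshrH : ∃ b, a < b ∧ μ (B ∩ D ∩ {x | b ≤ H x}) ≠ 0 := by
    by_contra hno
    push_neg at hno
    have hU : μ (⋃ n : ℕ, B ∩ D ∩ {x | a + 1 / ((n : ℝ) + 1) ≤ H x}) = 0 := by
      refine measure_iUnion_null fun n => ?_
      refine hno _ ?_
      have : (0:ℝ) < 1 / ((n : ℝ) + 1) := by positivity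
      linarith
    apply hBD
    refine measure_mono_null (fun x hx => ?_) hU
    have haH : a < H x := hx.1.1
    obtain ⟨n, hn⟩ := exists_nat_one_div_lt (sub_pos.2 haH)
    exact mem_iUnion.2 ⟨n, hx, by simp only [mem_setOf_eq]; linarith⟩
  obtain ⟨c', hcc', hXne⟩ := hshrC
  obtain ⟨b, hab, hYne⟩ := hshrH
  -- measurable rectangles
  set X : Set ℝ := {x | H x ≤ a} ∩ {x | c' ≤ R x} with hXdef
  set Y : Set ℝ := {x | b ≤ H x} ∩ {x | R x ≤ c} with hYdef
  have hXmeas : MeasurableSet X :=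
    (measurableSet_le hHm.measurable measurable_const).inter
      (measurableSet_le measurable_const hRmeas)
  have hYmeas : MeasurableSet Y :=
    (measurableSet_le measurable_const hHm.measurable).inter
      (measurableSet_le hRmeas measurable_const)
  have hXTpos : μ (X ∩ T) ≠ 0 := by
    intro h0
    apply hXne
    refine measure_mono_null (fun x hx => ?_) h0
    exact ⟨⟨hx.1.1.1, hx.2⟩, hx.1.1.2⟩
  have hYTpos : μ (Y ∩ T) ≠ 0 := by
    intro h0
    apply hYne
    refine measure_mono_null (fun x hx => ?_) h0
    exact ⟨⟨hx.2, hx.1.2.1⟩, hx.1.2.2⟩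
  -- lower-bound function
  set G : ℝ × ℝ → ℝ := fun z =>
    (X.indicator (fun x => (b - a) * V x) z.1) *
      (Y.indicator (fun x => (c' - c) * V x) z.2) with hGdef
  have hGint : Integrable G (μ.prod μ) :=
    ((hV_int.const_mul (b - a)).indicator hXmeas).mul_prod
      ((hV_int.const_mul (c' - c)).indicator hYmeas)
  have hGval : ∫ z, G z ∂(μ.prod μ) =
      (∫ x in X, (b - a) * V x ∂μ) * (∫ y in Y, (c' - c) * V y ∂μ) := by
    rw [hGdef, integral_prod_mul, integral_indicator hXmeas, integral_indicator hYmeas]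
  have hXint : 0 < ∫ x in X, (b - a) * V x ∂μ := by
    rw [setIntegral_pos_iff_support_of_nonneg_ae ?_ ((hV_int.const_mul (b - a)).integrableOn)]
    · refine lt_of_lt_of_le (pos_iff_ne_zero.2 hXTpos) (measure_mono fun x hx => ?_)
      refine ⟨?_, hx.1⟩
      exact (mul_pos (sub_pos.2 hab) (hVpos x hx.2)).ne'
    · refine ae_restrict_of_ae ?_
      filter_upwards [haeT] with x hx
      exact (mul_pos (sub_pos.2 hab) (hVpos x hx)).le
  have hYint : 0 < ∫ y in Y, (c' - c) * V y ∂μ := by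
    rw [setIntegral_pos_iff_support_of_nonneg_ae ?_ ((hV_int.const_mul (c' - c)).integrableOn)]
    · refine lt_of_lt_of_le (pos_iff_ne_zero.2 hYTpos) (measure_mono fun x hx => ?_)
      refine ⟨?_, hx.1⟩
      exact (mul_pos (sub_pos.2 hcc') (hVpos x hx.2)).ne'
    · refine ae_restrict_of_ae ?_
      filter_upwards [haeT] with x hx
      exact (mul_pos (sub_pos.2 hcc') (hVpos x hx)).le
  -- a.e. pointwise bound G ≤ Φ
  have hGle : ∀ᵐ z ∂(μ.prod μ), G z ≤ Φ z := by
    filter_upwards [haeTT] with z hz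
    by_cases hzXY : z.1 ∈ X ∧ z.2 ∈ Y
    · rw [hGdef]
      simp only [indicator_of_mem hzXY.1, indicator_of_mem hzXY.2]
      have hV1 := hVpos _ hz.1
      have hV2 := hVpos _ hz.2
      have hH12 : b - a ≤ H z.2 - H z.1 := by
        have h1 : H z.1 ≤ a := hzXY.1.1
        have h2 : b ≤ H z.2 := hzXY.2.1
        linarith
      have hR12 : c' - c ≤ R z.1 - R z.2 := by
        have h1 : c' ≤ R z.1 := hzXY.1.2
        have h2 : R z.2 ≤ c := hzXY.2.2
        linarith
      have hfact : V z.1 * F z.2 - F z.1 * V z.2 = V z.1 * V z.2 * (R z.2 - R z.1) := by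
        rw [hRdef]
        field_simp
      have h1 : (b - a) * (c' - c) ≤ (H z.2 - H z.1) * (R z.1 - R z.2) :=
        mul_le_mul hH12 hR12 (sub_pos.2 hcc').le (by linarith)
      have h2 : (b - a) * (c' - c) * (V z.1 * V z.2) ≤
          (H z.2 - H z.1) * (R z.1 - R z.2) * (V z.1 * V z.2) :=
        mul_le_mul_of_nonneg_right h1 (mul_pos hV1 hV2).le
      calc (b - a) * V z.1 * ((c' - c) * V z.2)
          = (b - a) * (c' - c) * (V z.1 * V z.2) := by ring
        _ ≤ (H z.2 - H z.1) * (R z.1 - R z.2) * (V z.1 * V z.2) := h2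
        _ = (H z.1 - H z.2) * (V z.1 * V z.2 * (R z.2 - R z.1)) := by ring
        _ = (H z.1 - H z.2) * (V z.1 * F z.2 - F z.1 * V z.2) := by rw [hfact]
        _ = Φ z := by rw [hΦdef]
    · have hG0 : G z = 0 := by
        show X.indicator (fun x => (b - a) * V x) z.1 *
          Y.indicator (fun x => (c' - c) * V x) z.2 = 0
        rcases not_and_or.1 hzXY with hz1 | hz2
        · rw [indicator_of_notMem hz1, zero_mul]
        · rw [indicator_of_notMem hz2, mul_zero]
      rw [hG0]
      have := hΦnn _ hz.1 _ hz.2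
      simpa using this
  -- conclude
  have hΦpos : 0 < ∫ z, Φ z ∂(μ.prod μ) := by
    calc (0:ℝ) < ∫ z, G z ∂(μ.prod μ) := by
          rw [hGval]
          exact mul_pos hXint hYint
      _ ≤ ∫ z, Φ z ∂(μ.prod μ) := integral_mono_ae hGint hΦint hGle
  rw [hΦval] at hΦpos
  rw [gt_iff_lt, div_lt_div_iff₀ (hIF ▸ hIFpos) (hIV ▸ hIVpos), hIHV, hIHF, hIV, hIF]
  linarith
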